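/- Let (T_k)_{k∈ℕ} be a sequence of bounded linear operators on a complex Hilbert space H and C ≥ 0. Suppose that ‖∑_{k∈F} ε_k T_k‖ ≤ C for every finite set F ⊆ ℕ and every family of complex numbers (ε_k)_{k∈F} with |ε_k| ≤ 1 for all k. Then for every vector x ∈ H the partial sums ∑_{k=1}^n T_k x converge in H as n → ∞, and the limit operator S (defined by S x = lim_n ∑_{k=1}^n T_k x) is a bounded linear operator with ‖S‖ ≤ C. -/

import Mathlib

/-!
Fix `x` and put `u k = T k x`. Choosing the signs of a finite family of vectors one
at a time, the parallelogram law makes `‖∑ ε j • v j‖²` dominate `∑ ‖v j‖²`. Applied to the sums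
of `u` over pairwise disjoint finite blocks, the hypothesis bounds the sum of the squared block
norms by `(C‖x‖)²`, so infinitely many disjoint blocks of norm `≥ δ` cannot exist: the sums of `u`
satisfy the Cauchy criterion for unconditional convergence. The pointwise limit is a bounded
operator by Banach–Steinhaus, and its norm inherits the bound `C` from the partial sums.
-/

open Filter Finset Function Topology

section Signs

variable {𝕜 E : Type*} [RCLike 𝕜] [NormedAddCommGroup E] [InnerProductSpace 𝕜 E]

theorem exists_norm_eq_one_norm_sq_add_le (x y : E) :
    ∃ σ : 𝕜, ‖σ‖ = 1 ∧ ‖x‖ ^ 2 + ‖y‖ ^ 2 ≤ ‖x + σ • y‖ ^ 2 := by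
  by_cases hplus : ‖x‖ ^ 2 + ‖y‖ ^ 2 ≤ ‖x + y‖ ^ 2
  · exact ⟨1, norm_one, by simpa using hplus⟩
  · refine ⟨-1, by simp, ?_⟩
    have := parallelogram_law_with_norm 𝕜 x y
    simp only [neg_smul, one_smul, ← sub_eq_add_neg]
    linarith

theorem exists_sum_norm_sq_le_norm_sum_smul_sq {ι : Type*} [DecidableEq ι] (v : ι → E)
    (s : Finset ι) :
    ∃ ε : ι → 𝕜, (∀ j, ‖ε j‖ ≤ 1) ∧ ∑ j ∈ s, ‖v j‖ ^ 2 ≤ ‖∑ j ∈ s, ε j • v j‖ ^ 2 := by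
  induction s using Finset.induction_on with
  | empty => exact ⟨0, by simp, by simp⟩
  | insert a s ha ih =>
    obtain ⟨ε, hε, hs⟩ := ih
    obtain ⟨σ, hσ, hσa⟩ := exists_norm_eq_one_norm_sq_add_le (𝕜 := 𝕜) (v a) (∑ j ∈ s, ε j • v j)
    refine ⟨update (σ • ε) a 1, fun j => ?_, ?_⟩
    · rcases eq_or_ne j a with rfl | hj
      · simp
      · simpa [update_of_ne hj, hσ] using hε j
    · have hrest : ∑ j ∈ s, update (σ • ε) a 1 j • v j = σ • ∑ j ∈ s, ε j • v j := by
        rw [smul_sum]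
        refine sum_congr rfl fun j hj => ?_
        rw [update_of_ne (ne_of_mem_of_not_mem hj ha), Pi.smul_apply, smul_eq_mul,
          mul_smul]
      rw [sum_insert ha, sum_insert ha, hrest, update_self, one_smul]
      linarith

end Signs

theorem exists_seq_pairwise_disjoint_of_forall_exists_disjoint {ι : Type*} [DecidableEq ι]
    {P : Finset ι → Prop} (h : ∀ s : Finset ι, ∃ t, Disjoint t s ∧ P t) :
    ∃ B : ℕ → Finset ι, Pairwise (Disjoint on B) ∧ ∀ n, P (B n) := by
  choose t hdisj hP using h
  -- `s n` is the union of the first `n` blocks, and block `n` is `t (s n)`.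
  let s : ℕ → Finset ι := fun n => Nat.rec ∅ (fun _ s => s ∪ t s) n
  have hs_mono : Monotone s := monotone_nat_of_le_succ fun n => subset_union_left
  refine ⟨fun n => t (s n), (pairwise_disjoint_on _).2 fun m n hmn => ?_, fun n => hP _⟩
  have hsub : t (s m) ⊆ s n := subset_union_right.trans (hs_mono (Nat.succ_le_of_lt hmn))
  exact ((hdisj (s n)).mono_right hsub).symm

section BoundedSignedSums

variable {𝕜 E ι : Type*} [RCLike 𝕜] [NormedAddCommGroup E] [InnerProductSpace 𝕜 E]
  {u : ι → E} {M : ℝ}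

theorem sum_norm_sq_sum_le_of_norm_sum_smul_le
    (hu : ∀ (F : Finset ι) (ε : ι → 𝕜), (∀ k ∈ F, ‖ε k‖ ≤ 1) → ‖∑ k ∈ F, ε k • u k‖ ≤ M)
    {κ : Type*} {B : κ → Finset ι} (I : Finset κ) (hB : (I : Set κ).PairwiseDisjoint B) :
    ∑ j ∈ I, ‖∑ k ∈ B j, u k‖ ^ 2 ≤ M ^ 2 := by
  classical
  obtain ⟨ε, hε, hsq⟩ := exists_sum_norm_sq_le_norm_sum_smul_sq (𝕜 := 𝕜) (fun j => ∑ k ∈ B j, u k) I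
  -- `η k` is the sign of the (unique, by disjointness) block containing `k`.
  let η : ι → 𝕜 := fun k => ∑ j ∈ I, if k ∈ B j then ε j else 0
  have hη : ∀ j ∈ I, ∀ k ∈ B j, η k = ε j := fun j hj k hk =>
    (sum_eq_single_of_mem j hj fun i hi hij =>
      if_neg fun hki => Finset.disjoint_left.1 (hB hi hj hij) hki hk).trans (if_pos hk)
  have hsum : ∑ j ∈ I, ε j • ∑ k ∈ B j, u k = ∑ k ∈ I.biUnion B, η k • u k := by
    rw [sum_biUnion hB]
    refine sum_congr rfl fun j hj => ?_
    rw [smul_sum]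
    exact sum_congr rfl fun k hk => by rw [hη j hj k hk]
  have hbound : ‖∑ k ∈ I.biUnion B, η k • u k‖ ≤ M := hu _ η fun k hk => by
    obtain ⟨j, hj, hk⟩ := mem_biUnion.1 hk
    exact hη j hj k hk ▸ hε j
  calc ∑ j ∈ I, ‖∑ k ∈ B j, u k‖ ^ 2 ≤ ‖∑ k ∈ I.biUnion B, η k • u k‖ ^ 2 := hsum ▸ hsq
    _ ≤ M ^ 2 := pow_le_pow_left₀ (norm_nonneg _) hbound 2

theorem summable_of_norm_sum_smul_le [CompleteSpace E]
    (hu : ∀ (F : Finset ι) (ε : ι → 𝕜), (∀ k ∈ F, ‖ε k‖ ≤ 1) → ‖∑ k ∈ F, ε k • u k‖ ≤ M) :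
    Summable u := by
  classical
  by_contra hns
  obtain ⟨δ, hδ, hlarge⟩ : ∃ δ > 0, ∀ s : Finset ι, ∃ t, Disjoint t s ∧ δ ≤ ‖∑ k ∈ t, u k‖ := by
    simpa [summable_iff_vanishing_norm] using hns
  obtain ⟨B, hB, hBδ⟩ := exists_seq_pairwise_disjoint_of_forall_exists_disjoint hlarge
  obtain ⟨J, hJ⟩ := exists_nat_gt (M ^ 2 / δ ^ 2)
  have hJδ : (J : ℝ) * δ ^ 2 ≤ M ^ 2 := calc
    (J : ℝ) * δ ^ 2 = ∑ _j ∈ range J, δ ^ 2 := by simp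
    _ ≤ ∑ j ∈ range J, ‖∑ k ∈ B j, u k‖ ^ 2 :=
      sum_le_sum fun j _ => pow_le_pow_left₀ hδ.le (hBδ j) 2
    _ ≤ M ^ 2 := sum_norm_sq_sum_le_of_norm_sum_smul_le hu _ (hB.set_pairwise _)
  rw [div_lt_iff₀ (by positivity)] at hJ
  linarith

end BoundedSignedSums

theorem sot_convergence_of_unconditional_bound {H : Type*} [NormedAddCommGroup H]
    [InnerProductSpace ℂ H] [CompleteSpace H] (T : ℕ → (H →L[ℂ] H)) (C : ℝ) (hC : 0 ≤ C)
    (h : ∀ (F : Finset ℕ) (ε : ℕ → ℂ), (∀ k ∈ F, ‖ε k‖ ≤ 1) →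
      ‖∑ k ∈ F, ε k • T k‖ ≤ C) :
    ∃ S : H →L[ℂ] H,
      (∀ x : H, Filter.Tendsto (fun n => ∑ k ∈ Finset.range n, T k x)
        Filter.atTop (nhds (S x))) ∧
      ‖S‖ ≤ C := by
  have hbound (x : H) (F : Finset ℕ) (ε : ℕ → ℂ) (hε : ∀ k ∈ F, ‖ε k‖ ≤ 1) :
      ‖∑ k ∈ F, ε k • T k x‖ ≤ C * ‖x‖ := by
    simpa using ((∑ k ∈ F, ε k • T k).le_opNorm x).trans
      (mul_le_mul_of_nonneg_right (h F ε hε) (norm_nonneg x))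
  have hpartial (x : H) :
      Tendsto (fun n => ∑ k ∈ range n, T k x) atTop (𝓝 (∑' k, T k x)) :=
    (summable_of_norm_sum_smul_le (hbound x)).hasSum.tendsto_sum_nat
  let S : H →L[ℂ] H := continuousLinearMapOfTendsto (fun n => ∑ k ∈ range n, T k)
    (tendsto_pi_nhds.2 fun x => by simpa using hpartial x)
  refine ⟨S, hpartial, S.opNorm_le_bound hC fun x => ?_⟩
  refine le_of_tendsto' (hpartial x).norm fun n => ?_
  simpa using hbound x (range n) 1 (by simp)
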